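/- The angular Kronecker constant of the set {1, 2, 3} equals 1/4; that is, α({1,2,3}) = 1/4. -/

import Mathlib

/-- Distance from a real number to the nearest integer. -/
noncomputable def distNearestInt (t : ℝ) : ℝ := ⨅ k : ℤ, |t - (k : ℝ)|

/-- The angular Kronecker constant of a finite set of integers: the infimum of all `ε ≥ 0`
such that every target `φ : ℤ → ℝ` can be interpolated to within `ε` (in the distance to the
nearest integer) by some `x ∈ ℝ` on the set `S`. -/
noncomputable def angularKronecker (S : Finset ℤ) : ℝ :=
  sInf {ε : ℝ | 0 ≤ ε ∧ ∀ φ : ℤ → ℝ, ∃ x : ℝ, ∀ n ∈ S, distNearestInt ((n : ℝ) * x - φ n) ≤ ε}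

/-!
Subtracting `n * φ 1` from the targets reduces the upper bound to finding, for arbitrary `b` and
`c`, a `t` with `‖t‖, ‖2t - b‖, ‖3t - c‖ ≤ 1/4`. After the symmetries `t ↦ -t` and `b ↦ b + 1` we
may take `0 ≤ b ≤ 1/2`; the admissible `t` for the first two conditions then contain enough points
for `3t` to sweep an interval of length `1/2` modulo `1`, and every such interval contains a point
within `1/4` of `c` modulo `1`.

For the lower bound take the targets `0, 1/2, 0`: if `‖x‖, ‖3x‖ < 1/4` then `3x` is within `1/4`
of the same integer as `3` times the integer nearest `x`, so `‖x‖ < 1/12`, and then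
`‖2x - 1/2‖ > 1/3`.
-/

open Set

lemma distNearestInt_le_abs_sub_intCast (t : ℝ) (k : ℤ) : distNearestInt t ≤ |t - k| :=
  ciInf_le ⟨0, by rintro _ ⟨j, rfl⟩; exact abs_nonneg _⟩ k

lemma distNearestInt_eq_abs_sub_round (t : ℝ) : distNearestInt t = |t - round t| :=
  le_antisymm (distNearestInt_le_abs_sub_intCast t _) (le_ciInf (round_le t))

lemma distNearestInt_le_half (t : ℝ) : distNearestInt t ≤ 1 / 2 :=
  (distNearestInt_eq_abs_sub_round t).trans_le (abs_sub_round t)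

lemma distNearestInt_le_of_le_of_le {t ε : ℝ} (k : ℤ) (h₁ : k - ε ≤ t) (h₂ : t ≤ k + ε) :
    distNearestInt t ≤ ε :=
  (distNearestInt_le_abs_sub_intCast t k).trans (abs_sub_le_iff.2 ⟨by linarith, by linarith⟩)

lemma distNearestInt_add_intCast_le (t : ℝ) (m : ℤ) :
    distNearestInt (t + m) ≤ distNearestInt t := by
  rw [distNearestInt_eq_abs_sub_round t]
  simpa using distNearestInt_le_abs_sub_intCast (t + m) (round t + m)

lemma distNearestInt_add_intCast (t : ℝ) (m : ℤ) : distNearestInt (t + m) = distNearestInt t :=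
  le_antisymm (distNearestInt_add_intCast_le t m)
    (by simpa using distNearestInt_add_intCast_le (t + m) (-m))

lemma distNearestInt_neg_le (t : ℝ) : distNearestInt (-t) ≤ distNearestInt t := by
  rw [distNearestInt_eq_abs_sub_round t, ← abs_neg]
  simpa [neg_add_eq_sub] using distNearestInt_le_abs_sub_intCast (-t) (-round t)

lemma distNearestInt_neg (t : ℝ) : distNearestInt (-t) = distNearestInt t :=
  le_antisymm (distNearestInt_neg_le t) (by simpa using distNearestInt_neg_le (-t))

lemma angularKronecker_le {S : Finset ℤ} {ε : ℝ} (hε : 0 ≤ ε)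
    (h : ∀ φ : ℤ → ℝ, ∃ x : ℝ, ∀ n ∈ S, distNearestInt ((n : ℝ) * x - φ n) ≤ ε) :
    angularKronecker S ≤ ε :=
  csInf_le ⟨0, fun _ hδ => hδ.1⟩ ⟨hε, h⟩

lemma le_angularKronecker {S : Finset ℤ} {ε : ℝ} (φ : ℤ → ℝ)
    (h : ∀ x : ℝ, ∃ n ∈ S, ε ≤ distNearestInt ((n : ℝ) * x - φ n)) :
    ε ≤ angularKronecker S := by
  refine le_csInf ⟨1 / 2, by norm_num, fun _ => ⟨0, fun n _ => distNearestInt_le_half _⟩⟩ ?_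
  rintro δ ⟨-, hδ⟩
  obtain ⟨x, hx⟩ := hδ φ
  obtain ⟨n, hn, hεn⟩ := h x
  exact hεn.trans (hx n hn)

lemma exists_mem_Icc_distNearestInt_sub_le_quarter (L c : ℝ) :
    ∃ v ∈ Icc L (L + 1 / 2), distNearestInt (v - c) ≤ 1 / 4 := by
  have hc : c - L = ⌊c - L⌋ + Int.fract (c - L) := (Int.floor_add_fract _).symm
  have h₀ := Int.fract_nonneg (c - L)
  have h₁ := Int.fract_lt_one (c - L)
  rcases le_or_gt (Int.fract (c - L)) (1 / 2) with h | h
  · exact ⟨L + Int.fract (c - L), ⟨by linarith, by linarith⟩,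
      distNearestInt_le_of_le_of_le (-⌊c - L⌋) (by push_cast; linarith) (by push_cast; linarith)⟩
  rcases le_or_gt (Int.fract (c - L)) (3 / 4) with h' | h'
  · exact ⟨L + 1 / 2, ⟨by linarith, le_rfl⟩,
      distNearestInt_le_of_le_of_le (-⌊c - L⌋) (by push_cast; linarith) (by push_cast; linarith)⟩
  · exact ⟨L, ⟨le_rfl, by linarith⟩, distNearestInt_le_of_le_of_le (-⌊c - L⌋ - 1)
      (by push_cast; linarith) (by push_cast; linarith)⟩

lemma exists_Icc_subset_three_mul_admissible {b : ℝ} (hb : b ∈ Icc (0 : ℝ) (1 / 2)) :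
    ∃ L : ℝ, ∀ v ∈ Icc L (L + 1 / 2), ∃ t : ℝ, ∃ m : ℤ, 3 * t = v + m ∧
      distNearestInt t ≤ 1 / 4 ∧ distNearestInt (2 * t - b) ≤ 1 / 4 := by
  obtain ⟨hb₀, hb₁⟩ := hb
  rcases le_or_gt b (1 / 4) with hb | hb
  · refine ⟨3 * b / 2 - 1 / 4, fun v ⟨hv₁, hv₂⟩ => ⟨v / 3, 0, by push_cast; ring, ?_, ?_⟩⟩
    · exact distNearestInt_le_of_le_of_le 0 (by push_cast; linarith) (by push_cast; linarith)
    · exact distNearestInt_le_of_le_of_le 0 (by push_cast; linarith) (by push_cast; linarith)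
  -- for `b > 1/4` the admissible `t` form two arcs, and `3t` covers `[1/4, 3/4]` only jointly
  refine ⟨1 / 4, fun v ⟨hv₁, hv₂⟩ => ?_⟩
  rcases le_or_gt (3 * b / 2 - 3 / 8) v with hv | hv
  · refine ⟨v / 3, 0, by push_cast; ring, ?_, ?_⟩
    · exact distNearestInt_le_of_le_of_le 0 (by push_cast; linarith) (by push_cast; linarith)
    · exact distNearestInt_le_of_le_of_le 0 (by push_cast; linarith) (by push_cast; linarith)
  · refine ⟨(v - 1) / 3, -1, by push_cast; ring, ?_, ?_⟩
    · exact distNearestInt_le_of_le_of_le 0 (by push_cast; linarith) (by push_cast; linarith)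
    · exact distNearestInt_le_of_le_of_le (-1) (by push_cast; linarith) (by push_cast; linarith)

lemma exists_distNearestInt_le_quarter_of_mem_Icc {b : ℝ} (hb : b ∈ Icc (0 : ℝ) (1 / 2))
    (c : ℝ) : ∃ t : ℝ, distNearestInt t ≤ 1 / 4 ∧ distNearestInt (2 * t - b) ≤ 1 / 4 ∧
      distNearestInt (3 * t - c) ≤ 1 / 4 := by
  obtain ⟨L, hL⟩ := exists_Icc_subset_three_mul_admissible hb
  obtain ⟨v, hv, hvc⟩ := exists_mem_Icc_distNearestInt_sub_le_quarter L c
  obtain ⟨t, m, h3t, h₁, h₂⟩ := hL v hv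
  exact ⟨t, h₁, h₂, by rwa [h3t, add_sub_right_comm, distNearestInt_add_intCast]⟩

lemma exists_distNearestInt_le_quarter (b c : ℝ) :
    ∃ t : ℝ, distNearestInt t ≤ 1 / 4 ∧ distNearestInt (2 * t - b) ≤ 1 / 4 ∧
      distNearestInt (3 * t - c) ≤ 1 / 4 := by
  have hb := abs_le.1 (abs_sub_round b)
  have hshift : ∀ s, 2 * s - b = 2 * s - (b - round b) + ((-round b : ℤ) : ℝ) := fun s => by
    push_cast; ring
  rcases le_total 0 (b - round b) with hb₀ | hb₀
  · obtain ⟨t, h₁, h₂, h₃⟩ :=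
      exists_distNearestInt_le_quarter_of_mem_Icc ⟨hb₀, hb.2⟩ c
    exact ⟨t, h₁, by rwa [hshift, distNearestInt_add_intCast], h₃⟩
  · obtain ⟨t, h₁, h₂, h₃⟩ :=
      exists_distNearestInt_le_quarter_of_mem_Icc (b := -(b - round b))
        ⟨by linarith, by linarith⟩ (-c)
    refine ⟨-t, by rwa [distNearestInt_neg], ?_, ?_⟩
    · rwa [hshift, distNearestInt_add_intCast, show 2 * -t - (b - round b) =
        -(2 * t - -(b - round b)) by ring, distNearestInt_neg]
    · rwa [show 3 * -t - c = -(3 * t - -c) by ring, distNearestInt_neg]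

lemma exists_forall_mem_one_two_three_distNearestInt_le_quarter (φ : ℤ → ℝ) :
    ∃ x : ℝ, ∀ n ∈ ({1, 2, 3} : Finset ℤ), distNearestInt ((n : ℝ) * x - φ n) ≤ 1 / 4 := by
  obtain ⟨t, h₁, h₂, h₃⟩ := exists_distNearestInt_le_quarter (φ 2 - 2 * φ 1) (φ 3 - 3 * φ 1)
  refine ⟨φ 1 + t, ?_⟩
  simp only [Finset.mem_insert, Finset.mem_singleton, forall_eq_or_imp, forall_eq]
  refine ⟨?_, ?_, ?_⟩
  · convert h₁ using 2; push_cast; ring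
  · convert h₂ using 2; push_cast; ring
  · convert h₃ using 2; push_cast; ring

lemma not_abs_sub_intCast_lt_quarter (x : ℝ) (k₁ k₂ k₃ : ℤ) (h₁ : |x - k₁| < 1 / 4)
    (h₂ : |2 * x - 1 / 2 - k₂| < 1 / 4) (h₃ : |3 * x - k₃| < 1 / 4) : False := by
  rw [abs_lt] at h₁ h₂ h₃
  have hk₃ : k₃ = 3 * k₁ := by
    have lo : ((3 * k₁ - 1 : ℤ) : ℝ) < k₃ := by push_cast; linarith
    have hi : (k₃ : ℝ) < ((3 * k₁ + 1 : ℤ) : ℝ) := by push_cast; linarith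
    have := Int.cast_lt.1 lo
    have := Int.cast_lt.1 hi
    omega
  subst hk₃
  have lo : ((2 * k₁ - 1 : ℤ) : ℝ) < k₂ := by push_cast at h₃ ⊢; linarith
  have hi : (k₂ : ℝ) < ((2 * k₁ : ℤ) : ℝ) := by push_cast at h₃ ⊢; linarith
  have := Int.cast_lt.1 lo
  have := Int.cast_lt.1 hi
  omega

lemma exists_mem_one_two_three_quarter_le_distNearestInt (x : ℝ) :
    ∃ n ∈ ({1, 2, 3} : Finset ℤ),
      1 / 4 ≤ distNearestInt ((n : ℝ) * x - if n = 2 then 1 / 2 else 0) := by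
  by_contra! h
  simp only [Finset.mem_insert, Finset.mem_singleton, forall_eq_or_imp, forall_eq] at h
  obtain ⟨h₁, h₂, h₃⟩ := h
  norm_num [distNearestInt_eq_abs_sub_round] at h₁ h₂ h₃
  exact not_abs_sub_intCast_lt_quarter x _ _ _ h₁ h₂ h₃

theorem alpha_one_two_three : angularKronecker {1, 2, 3} = 1 / 4 :=
  le_antisymm
    (angularKronecker_le (by norm_num) exists_forall_mem_one_two_three_distNearestInt_le_quarter)
    (le_angularKronecker _ exists_mem_one_two_three_quarter_le_distNearestInt)
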